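/- Cooperating is always a weakly best response for the altruistic player: for every fixed choice of strategies of the other three players, the payoff that Pa receives by choosing C is greater than or equal to the payoff Pa receives by choosing D; moreover, if Pm chooses D then choosing C gives Pa a strictly greater payoff than choosing D. The same holds for Qa (with Qm in place of Pm). -/
import Mathlib


/-- A strategy: cooperate or defect. -/
inductive Strat | C | D
deriving DecidableEq

open Strat

/-- A person's actual action is `C` iff both internal players choose `C`. -/
def act (a b : Strat) : Strat := if a = C ∧ b = C then C else D

/-- Base payoff `u x y` for a person acting `x` against the other acting `y`. -/
def u : Strat → Strat → ℤ
  | C, C => 3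
  | C, D => 1
  | D, C => 4
  | D, D => 2

/-- Payoff of the mercenary player Pm. -/
def payPm (pm pa qm qa : Strat) : ℤ := u (act pm pa) (act qm qa)

/-- Payoff of the altruistic player Pa (guilt of 1 if Pa defects). -/
def payPa (pm pa qm qa : Strat) : ℤ :=
  u (act pm pa) (act qm qa) - (if pa = D then 1 else 0)

/-- Payoff of the mercenary player Qm. -/
def payQm (pm pa qm qa : Strat) : ℤ := u (act qm qa) (act pm pa)

/-- Payoff of the altruistic player Qa (guilt of 1 if Qa defects). -/
def payQa (pm pa qm qa : Strat) : ℤ :=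
  u (act qm qa) (act pm pa) - (if qa = D then 1 else 0)

/-- `(pm, pa, qm, qa)` is a pure Nash equilibrium: no single player can
strictly increase their own payoff by unilaterally changing their strategy. -/
def isNash (pm pa qm qa : Strat) : Prop :=
  (∀ pm' : Strat, payPm pm' pa qm qa ≤ payPm pm pa qm qa) ∧
  (∀ pa' : Strat, payPa pm pa' qm qa ≤ payPa pm pa qm qa) ∧
  (∀ qm' : Strat, payQm pm pa qm' qa ≤ payQm pm pa qm qa) ∧
  (∀ qa' : Strat, payQa pm pa qm qa' ≤ payQa pm pa qm qa)

theorem altruist_cooperate_weakly_best :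
    (∀ pm qm qa : Strat, payPa pm Strat.D qm qa ≤ payPa pm Strat.C qm qa) ∧
    (∀ qm qa : Strat, payPa Strat.D Strat.D qm qa < payPa Strat.D Strat.C qm qa) ∧
    (∀ pm pa qm : Strat, payQa pm pa qm Strat.D ≤ payQa pm pa qm Strat.C) ∧
    (∀ pm pa : Strat, payQa pm pa Strat.D Strat.D < payQa pm pa Strat.D Strat.C) := by
  refine ⟨?_, ?_, ?_, ?_⟩ <;> intro a b <;> first
    | (intro c; cases a <;> cases b <;> cases c <;> decide)
    | (cases a <;> cases b <;> decide)
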